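/- Let φ : F → ℝ be locally Lipschitz. If (f_n) is a sequence in F converging to f₀ such that lim_n λ_{φ,ϕ}(f_n) = 0 for every finite subset ϕ of F, then λ_{φ,ϕ}(f₀) = 0 for every finite ϕ, hence 0 ∈ ∂φ(f₀); that is, f₀ is a critical point of φ. -/

import Mathlib

/- Setting: `F` (and `E`) are Fréchet spaces: complete topological vector spaces over ℝ
whose topology is generated by an increasing sequence of seminorms `p 0 ≤ p 1 ≤ ⋯`
(`Monotone p` together with `WithSeminorms p`).  The first seminorm of the family,
written `‖·‖¹` in the paper, is `p 0`.  The dual `F'` with its weak* topology is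
`WeakDual ℝ F`. -/

open Filter Topology

section Defs

variable {E F : Type*}
  [AddCommGroup E] [Module ℝ E] [UniformSpace E] [IsUniformAddGroup E] [ContinuousSMul ℝ E]
  [AddCommGroup F] [Module ℝ F] [UniformSpace F] [IsUniformAddGroup F] [ContinuousSMul ℝ F]

/-- Clarke's generalized directional derivative
`φ°(f;g) = limsup_{h → f, t ↓ 0} (φ(h+tg) − φ(h))/t`. -/
noncomputable def clarkeDeriv (φ : F → ℝ) (f g : F) : ℝ :=
  Filter.limsup (fun q : F × ℝ => (φ (q.1 + q.2 • g) - φ q.1) / q.2)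
    ((𝓝 f) ×ˢ (𝓝[>] (0 : ℝ)))

/-- The Clarke subdifferential `∂φ(f) = {f' ∈ F' : ⟨f',g⟩ ≤ φ°(f;g) ∀ g}`, a subset of
the dual equipped with the weak* topology. -/
def clarkeSubdiff (φ : F → ℝ) (f : F) : Set (WeakDual ℝ F) :=
  {u | ∀ g : F, u g ≤ clarkeDeriv φ f g}

/-- Locally Lipschitz with respect to the first seminorm `p 0` of the defining
increasing family of seminorms (as used throughout the paper). -/
def LocLip (p : ℕ → Seminorm ℝ F) (φ : F → ℝ) : Prop :=
  ∀ x : F, ∃ U ∈ 𝓝 x, ∃ K : ℝ, 0 ≤ K ∧ ∀ a ∈ U, ∀ b ∈ U, |φ a - φ b| ≤ K * (p 0) (a - b)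

/-- The weak* seminorm `ρ_ϕ(y) = sup_{x ∈ ϕ} |y x|` attached to a finite set `ϕ`. -/
noncomputable def dualSeminorm (s : Finset F) (y : WeakDual ℝ F) : ℝ :=
  ⨆ x ∈ s, |y x|

/-- `λ_{φ,ϕ}(f) = min_{y ∈ ∂φ(f)} ρ_ϕ(y)`. -/
noncomputable def lam (φ : F → ℝ) (s : Finset F) (f : F) : ℝ :=
  sInf (dualSeminorm s '' clarkeSubdiff φ f)

/-- The Chang Palais–Smale condition. -/
def ChangPS (φ : F → ℝ) : Prop :=
  ∀ u : ℕ → F, (∃ C : ℝ, ∀ n, |φ (u n)| ≤ C) →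
    (∀ s : Finset F, Tendsto (fun n => lam φ s (u n)) atTop (𝓝 0)) →
    ∃ g : ℕ → ℕ, StrictMono g ∧ ∃ x : F, Tendsto (u ∘ g) atTop (𝓝 x)

/-- The Chang Palais–Smale condition at level `c`. -/
def ChangPSAt (φ : F → ℝ) (c : ℝ) : Prop :=
  ∀ u : ℕ → F, Tendsto (fun n => φ (u n)) atTop (𝓝 c) →
    (∀ s : Finset F, Tendsto (fun n => lam φ s (u n)) atTop (𝓝 0)) →
    ∃ g : ℕ → ℕ, StrictMono g ∧ ∃ x : F, Tendsto (u ∘ g) atTop (𝓝 x)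

/-- Keller `C¹_c` on a set `U`, with derivative family `D`: directional derivatives exist,
each `D x` is continuous linear, and `(x,h) ↦ D x h` is jointly continuous. -/
def C1cOn (τ : E → F) (D : E → (E →L[ℝ] F)) (U : Set E) : Prop :=
  (∀ x ∈ U, ∀ h : E,
      Tendsto (fun t : ℝ => t⁻¹ • (τ (x + t • h) - τ x)) (𝓝[≠] (0 : ℝ)) (𝓝 (D x h))) ∧
  ContinuousOn (fun q : E × E => D q.1 q.2) (U ×ˢ (Set.univ : Set E))

/-- Keller `C¹_c` on a set (derivative existential). -/
def IsC1cOn (τ : E → F) (U : Set E) : Prop :=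
  ∃ D : E → (E →L[ℝ] F), C1cOn τ D U

/-- Local `C¹_c`-diffeomorphism: every point has an open neighbourhood mapped bijectively
onto an open set, `τ` being `C¹_c` there with a `C¹_c` inverse. -/
def IsLocalC1cDiffeo (τ : E → F) : Prop :=
  ∀ x : E, ∃ U : Set E, IsOpen U ∧ x ∈ U ∧ ∃ V : Set F, IsOpen V ∧ Set.BijOn τ U V ∧
    IsC1cOn τ U ∧ ∃ σ : F → E, (∀ y ∈ V, τ (σ y) = y) ∧ (∀ x' ∈ U, σ (τ x') = x') ∧
      IsC1cOn σ V

end Defs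

/-! The Clarke derivative `g ↦ φ°(f; g)` of a locally Lipschitz `φ` is sublinear and bounded by
`K ‖g‖¹`, so by Hahn–Banach `∂φ(f)` is nonempty (this matters: `λ` is an infimum, and `sInf ∅ = 0`).
Hence `λ_{φ,{g}}(fₙ) → 0` yields `yₙ ∈ ∂φ(fₙ)` with `yₙ g → 0`, and `φ°(fₙ; g) ≥ yₙ g`. Since
`f ↦ φ°(f; g)` is upper semicontinuous (the difference quotients are controlled on product
neighbourhoods), `φ°(f₀; g) ≥ 0` for all `g`, i.e. `0 ∈ ∂φ(f₀)`, and then every `λ_{φ,ϕ}(f₀)`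
vanishes. -/

theorem map_prodMap_mul_left_nhds_prod_nhdsGT {X : Type*} [TopologicalSpace X] (x : X) {c : ℝ}
    (hc : 0 < c) : map (Prod.map id (c * ·)) (𝓝 x ×ˢ 𝓝[>] 0) = 𝓝 x ×ˢ 𝓝[>] 0 := by
  rw [← prod_map_map_eq', map_id, ← comap_mulLeft_nhdsGT_zero hc,
    map_comap_of_surjective (mul_left_surjective₀ hc.ne'), comap_mulLeft_nhdsGT_zero hc]

theorem UpperSemicontinuousAt.le_of_tendsto {X ι β : Type*} [TopologicalSpace X] [LinearOrder β]
    [DenselyOrdered β] {u : X → β} {x : X} (hu : UpperSemicontinuousAt u x) {l : Filter ι}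
    [l.NeBot] {v : ι → X} (hv : Tendsto v l (𝓝 x)) {a : β} (h : ∀ b < a, ∀ᶠ i in l, b < u (v i)) :
    a ≤ u x := by
  by_contra! hlt
  obtain ⟨b, hxb, hba⟩ := exists_between hlt
  obtain ⟨i, hub, hbu⟩ := ((hv.eventually (hu b hxb)).and (h b hba)).exists
  exact hub.not_gt hbu

section ClarkeDerivative

variable {F : Type*} [AddCommGroup F] [Module ℝ F] [UniformSpace F] {φ : F → ℝ}

noncomputable def clarkeQuotient (φ : F → ℝ) (g : F) (r : F × ℝ) : ℝ :=
  (φ (r.1 + r.2 • g) - φ r.1) / r.2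

theorem clarkeDeriv_eq_limsup (φ : F → ℝ) (f g : F) :
    clarkeDeriv φ f g = limsup (clarkeQuotient φ g) (𝓝 f ×ˢ 𝓝[>] 0) := rfl

theorem dualSeminorm_nonneg (s : Finset F) (y : WeakDual ℝ F) : 0 ≤ dualSeminorm s y :=
  Real.iSup_nonneg fun _ => Real.iSup_nonneg fun _ => abs_nonneg _

theorem dualSeminorm_singleton (g : F) (y : WeakDual ℝ F) : dualSeminorm {g} y = |y g| := by
  have hle : ∀ x, ⨆ _ : x ∈ ({g} : Finset F), |y x| ≤ |y g| := fun x =>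
    Real.iSup_le (fun hx => Finset.mem_singleton.1 hx ▸ le_rfl) (abs_nonneg _)
  refine le_antisymm (Real.iSup_le hle (abs_nonneg _)) ?_
  exact le_ciSup_of_le ⟨_, Set.forall_mem_range.2 hle⟩ g
    (ciSup_pos (f := fun _ => |y g|) (Finset.mem_singleton_self g)).ge

theorem dualSeminorm_zero (s : Finset F) : dualSeminorm s (0 : WeakDual ℝ F) = 0 := by
  have hzero : ∀ x, (0 : WeakDual ℝ F) x = 0 := fun _ => rfl
  simp [dualSeminorm, hzero]

theorem lam_nonneg (φ : F → ℝ) (s : Finset F) (f : F) : 0 ≤ lam φ s f :=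
  Real.sInf_nonneg (Set.forall_mem_image.2 fun y _ => dualSeminorm_nonneg s y)

theorem lam_eq_zero_of_zero_mem {f : F} (h : (0 : WeakDual ℝ F) ∈ clarkeSubdiff φ f)
    (s : Finset F) : lam φ s f = 0 := by
  refine le_antisymm ?_ (lam_nonneg φ s f)
  calc lam φ s f ≤ dualSeminorm s 0 :=
        csInf_le ⟨0, Set.forall_mem_image.2 fun y _ => dualSeminorm_nonneg s y⟩ ⟨0, h, rfl⟩
    _ = 0 := dualSeminorm_zero s

theorem neg_lt_clarkeDeriv_of_lam_singleton_lt {f g : F} {ε : ℝ}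
    (hne : (clarkeSubdiff φ f).Nonempty) (hlt : lam φ {g} f < ε) :
    -ε < clarkeDeriv φ f g := by
  obtain ⟨_, ⟨y, hy, rfl⟩, hyε⟩ := exists_lt_of_csInf_lt (hne.image _) hlt
  rw [dualSeminorm_singleton] at hyε
  exact (neg_lt_neg hyε).trans_le ((neg_abs_le _).trans (hy g))

variable [ContinuousAdd F] [ContinuousSMul ℝ F]

theorem tendsto_add_smul_nhds_prod_nhdsGT (f g : F) :
    Tendsto (fun r : F × ℝ => r.1 + r.2 • g) (𝓝 f ×ˢ 𝓝[>] 0) (𝓝 f) := by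
  simpa using (tendsto_fst (g := 𝓝[>] (0 : ℝ))).add
    ((tendsto_snd.mono_right nhdsWithin_le_nhds).smul_const g)

theorem eventually_abs_clarkeQuotient_le {q : Seminorm ℝ F} {f : F} {U : Set F} (hU : U ∈ 𝓝 f)
    {K : ℝ} (hK : ∀ a ∈ U, ∀ b ∈ U, |φ a - φ b| ≤ K * q (a - b)) (g : F) :
    ∀ᶠ r in 𝓝 f ×ˢ 𝓝[>] 0, |clarkeQuotient φ g r| ≤ K * q g := by
  filter_upwards [tendsto_fst.eventually hU,
    (tendsto_add_smul_nhds_prod_nhdsGT f g).eventually hU,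
    tendsto_snd.eventually self_mem_nhdsWithin] with ⟨x, t⟩ hx hxt (ht : 0 < t)
  have hlip := hK _ hxt _ hx
  rw [add_sub_cancel_left, map_smul_eq_mul, Real.norm_eq_abs, abs_of_pos ht] at hlip
  rw [clarkeQuotient, abs_div, abs_of_pos ht, div_le_iff₀ ht]
  linarith

theorem clarkeDeriv_le_of_lipschitz {q : Seminorm ℝ F} {f : F} {U : Set F} (hU : U ∈ 𝓝 f)
    {K : ℝ} (hK : ∀ a ∈ U, ∀ b ∈ U, |φ a - φ b| ≤ K * q (a - b)) (g : F) :
    clarkeDeriv φ f g ≤ K * q g := by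
  have hbound := eventually_abs_clarkeQuotient_le hU hK g
  exact limsup_le_of_le
    (isBoundedUnder_le_abs.1 (isBoundedUnder_of_eventually_le hbound)).2.isCoboundedUnder_le
    (hbound.mono fun _ hr => (abs_le.1 hr).2)

variable {p : ℕ → Seminorm ℝ F}

theorem LocLip.isBoundedUnder_abs_clarkeQuotient_comp (hφ : LocLip p φ) {f : F} (g : F)
    {α : Type*} {l : Filter α} {m : α → F × ℝ} (hm : Tendsto m l (𝓝 f ×ˢ 𝓝[>] 0)) :
    IsBoundedUnder (· ≤ ·) l (fun a => |clarkeQuotient φ g (m a)|) := by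
  obtain ⟨U, hU, K, -, hK⟩ := hφ f
  exact isBoundedUnder_of_eventually_le (hm.eventually (eventually_abs_clarkeQuotient_le hU hK g))

theorem LocLip.isBoundedUnder_le_clarkeQuotient (hφ : LocLip p φ) (f g : F) :
    IsBoundedUnder (· ≤ ·) (𝓝 f ×ˢ 𝓝[>] 0) (clarkeQuotient φ g) :=
  (isBoundedUnder_le_abs.1 (hφ.isBoundedUnder_abs_clarkeQuotient_comp g tendsto_id)).1

theorem LocLip.isCoboundedUnder_le_clarkeQuotient (hφ : LocLip p φ) (f g : F) :
    IsCoboundedUnder (· ≤ ·) (𝓝 f ×ˢ 𝓝[>] 0) (clarkeQuotient φ g) :=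
  (isBoundedUnder_le_abs.1
    (hφ.isBoundedUnder_abs_clarkeQuotient_comp g tendsto_id)).2.isCoboundedUnder_le

theorem LocLip.clarkeDeriv_add_le (hφ : LocLip p φ) (f g₁ g₂ : F) :
    clarkeDeriv φ f (g₁ + g₂) ≤ clarkeDeriv φ f g₁ + clarkeDeriv φ f g₂ := by
  let L := 𝓝 f ×ˢ 𝓝[>] (0 : ℝ)
  let shift : F × ℝ → F × ℝ := fun r => (r.1 + r.2 • g₂, r.2)
  have hshift : Tendsto shift L L :=
    (tendsto_add_smul_nhds_prod_nhdsGT f g₂).prodMk tendsto_snd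
  have hsplit : clarkeQuotient φ (g₁ + g₂) =
      clarkeQuotient φ g₁ ∘ shift + clarkeQuotient φ g₂ := by
    ext ⟨x, t⟩
    simp only [clarkeQuotient, Pi.add_apply, Function.comp_apply, shift, smul_add,
      add_right_comm x (t • g₁), ← add_assoc]
    rw [← add_div, sub_add_sub_cancel]
  obtain ⟨hle, hge⟩ := isBoundedUnder_le_abs.1
    (hφ.isBoundedUnder_abs_clarkeQuotient_comp g₁ hshift)
  rw [clarkeDeriv_eq_limsup, hsplit]
  calc limsup (clarkeQuotient φ g₁ ∘ shift + clarkeQuotient φ g₂) L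
      ≤ limsup (clarkeQuotient φ g₁ ∘ shift) L + limsup (clarkeQuotient φ g₂) L :=
        limsup_add_le hge hle (hφ.isCoboundedUnder_le_clarkeQuotient f g₂)
          (hφ.isBoundedUnder_le_clarkeQuotient f g₂)
    _ ≤ limsup (clarkeQuotient φ g₁) L + limsup (clarkeQuotient φ g₂) L := by
        gcongr
        exact hshift.limsup_comp_le_limsup hge.isCoboundedUnder_le
          (hφ.isBoundedUnder_le_clarkeQuotient f g₁)

theorem LocLip.clarkeDeriv_smul (hφ : LocLip p φ) (f g : F) {c : ℝ} (hc : 0 < c) :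
    clarkeDeriv φ f (c • g) = c * clarkeDeriv φ f g := by
  let L := 𝓝 f ×ˢ 𝓝[>] (0 : ℝ)
  let scale : F × ℝ → F × ℝ := Prod.map id (c * ·)
  have hscale : map scale L = L := map_prodMap_mul_left_nhds_prod_nhdsGT f hc
  have hsplit : clarkeQuotient φ (c • g) = (c * ·) ∘ clarkeQuotient φ g ∘ scale := by
    ext ⟨x, t⟩
    rcases eq_or_ne t 0 with rfl | ht
    · simp [clarkeQuotient, scale]
    · simp only [clarkeQuotient, Function.comp_apply, scale, Prod.map, id, smul_smul,
        mul_comm t c]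
      field_simp
  obtain ⟨hle, hge⟩ := isBoundedUnder_le_abs.1
    (hφ.isBoundedUnder_abs_clarkeQuotient_comp g hscale.le)
  calc clarkeDeriv φ f (c • g) = limsup ((c * ·) ∘ clarkeQuotient φ g ∘ scale) L := by
        rw [clarkeDeriv_eq_limsup, hsplit]
    _ = c * limsup (clarkeQuotient φ g ∘ scale) L :=
        ((monotone_mul_left_of_nonneg hc.le).map_limsup_of_continuousAt _
          (continuous_const_mul c).continuousAt hle hge.isCoboundedUnder_le).symm
    _ = c * clarkeDeriv φ f g := by rw [limsup_comp, hscale, clarkeDeriv_eq_limsup]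

theorem LocLip.clarkeSubdiff_nonempty (hsp : WithSeminorms p) (hφ : LocLip p φ) (f : F) :
    (clarkeSubdiff φ f).Nonempty := by
  obtain ⟨U, hU, K, hK0, hK⟩ := hφ f
  have hzero : clarkeDeriv φ f 0 = 0 := by
    have hquot : clarkeQuotient φ 0 = fun _ => 0 := by ext; simp [clarkeQuotient]
    rw [clarkeDeriv_eq_limsup, hquot, limsup_const]
  obtain ⟨ℓ, -, hℓ⟩ := exists_extension_of_le_sublinear ⟨⊥, 0⟩ (clarkeDeriv φ f)
    (fun c hc g => hφ.clarkeDeriv_smul f g hc) (hφ.clarkeDeriv_add_le f)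
    (fun x => by simp [(Submodule.mem_bot ℝ).1 x.2, hzero])
  have hcont : Continuous ℓ := hsp.continuous_real_rng ℓ
    ⟨{0}, ⟨K, hK0⟩, fun g => (hℓ g).trans (by
      rw [Finset.sup_singleton]; exact clarkeDeriv_le_of_lipschitz hU hK g)⟩
  exact ⟨⟨ℓ, hcont⟩, hℓ⟩

theorem LocLip.upperSemicontinuous_clarkeDeriv (hφ : LocLip p φ) (g : F) :
    UpperSemicontinuous fun f => clarkeDeriv φ f g := by
  intro f c hc
  obtain ⟨c', hc', hc'c⟩ := exists_between hc
  obtain ⟨P, hP, Q, hQ, hPQ⟩ := eventually_prod_iff.1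
    (eventually_lt_of_limsup_lt hc' (hφ.isBoundedUnder_le_clarkeQuotient f g))
  -- `P` is a neighbourhood of every point `h` near `f`, so the bound `< c'` persists at `h`
  filter_upwards [eventually_eventually_nhds.2 hP] with h hh
  exact (limsup_le_of_le (hφ.isCoboundedUnder_le_clarkeQuotient h g)
    (eventually_prod_iff.2 ⟨P, hh, Q, hQ, fun {_} hx {_} hy => (hPQ hx hy).le⟩)).trans_lt hc'c

end ClarkeDerivative

theorem critical_of_lam_tendsto_zero_general
    {F : Type*} [AddCommGroup F] [Module ℝ F] [UniformSpace F] [IsUniformAddGroup F]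
    [ContinuousSMul ℝ F]
    (p : ℕ → Seminorm ℝ F) (hsp : WithSeminorms p)
    (φ : F → ℝ) (hφ : LocLip p φ)
    (fseq : ℕ → F) (f₀ : F)
    (hconv : Filter.Tendsto fseq Filter.atTop (𝓝 f₀))
    (hlam : ∀ s : Finset F, Filter.Tendsto (fun n => lam φ s (fseq n)) Filter.atTop (𝓝 0)) :
    (∀ s : Finset F, lam φ s f₀ = 0) ∧ (0 : WeakDual ℝ F) ∈ clarkeSubdiff φ f₀ := by
  have hnonneg : ∀ g, 0 ≤ clarkeDeriv φ f₀ g := fun g =>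
    UpperSemicontinuousAt.le_of_tendsto (hφ.upperSemicontinuous_clarkeDeriv g f₀) hconv fun b hb =>
      ((hlam {g}).eventually_lt_const (neg_pos.2 hb)).mono fun n hn => by
        simpa using neg_lt_clarkeDeriv_of_lam_singleton_lt (hφ.clarkeSubdiff_nonempty hsp _) hn
  have hcrit : (0 : WeakDual ℝ F) ∈ clarkeSubdiff φ f₀ := hnonneg
  exact ⟨lam_eq_zero_of_zero_mem hcrit, hcrit⟩

/-- limits of almost-critical sequences are critical points. -/
theorem critical_of_lam_tendsto_zero
    {F : Type*} [AddCommGroup F] [Module ℝ F] [UniformSpace F] [IsUniformAddGroup F]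
    [ContinuousSMul ℝ F] [CompleteSpace F]
    (p : ℕ → Seminorm ℝ F) (hmono : Monotone p) (hsp : WithSeminorms p)
    (φ : F → ℝ) (hφ : LocLip p φ)
    (fseq : ℕ → F) (f₀ : F)
    (hconv : Filter.Tendsto fseq Filter.atTop (𝓝 f₀))
    (hlam : ∀ s : Finset F, Filter.Tendsto (fun n => lam φ s (fseq n)) Filter.atTop (𝓝 0)) :
    (∀ s : Finset F, lam φ s f₀ = 0) ∧ (0 : WeakDual ℝ F) ∈ clarkeSubdiff φ f₀ :=
  critical_of_lam_tendsto_zero_general p hsp φ hφ fseq f₀ hconv hlam
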